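/- If $p$ and $q$ are real polynomials with strictly alternating (interlacing) real roots, then every nonzero polynomial in the real linear span $\{c_1 p + c_2 q : c_1, c_2 \in \mathbb{R}\}$ has only real and simple roots. -/

import Mathlib

open Polynomial

/-!
On the line `c₁ p + c₂ q` with `c₁ c₂ ≠ 0`, the value at a root `μⱼ` of `q` is `c₁ p(μⱼ)`, and `p`
changes sign between consecutive `μⱼ` because exactly one root of `p` lies between them. This gives
`n` roots, one in each gap `(μⱼ, μⱼ₊₁)`. Since all `n` roots of `p` lie in `(μ₀, μₙ)`, the signs of
`p(μ₀)` and `p(μₙ)` differ by `(-1)ⁿ`, which is incompatible with the behaviour at `±∞` of a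
polynomial of degree `n + 1` unless there is one more root outside `[μ₀, μₙ]`.
-/

namespace Polynomial

theorem card_roots_eq_natDegree_and_nodup_of_finset {R : Type*} [CommRing R] [IsDomain R]
    {f : R[X]} (hf : f ≠ 0) {s : Finset R} (hcard : s.card = f.natDegree)
    (hs : ∀ x ∈ s, f.IsRoot x) : f.roots.card = f.natDegree ∧ f.roots.Nodup := by
  have hroots : f.roots = s.val :=
    (Multiset.eq_of_le_of_card_le
      ((Multiset.le_iff_subset s.nodup).2 fun x hx => (mem_roots hf).2 (hs x hx))
      ((card_roots' f).trans_eq hcard.symm)).symm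
  rw [hroots]
  exact ⟨hcard, s.nodup⟩

theorem card_roots_eq_natDegree_and_nodup_C_mul_prod_X_sub_C {R ι : Type*} [CommRing R]
    [IsDomain R] [Fintype ι] {ρ : ι → R} (hρ : Function.Injective ρ) {c : R} (hc : c ≠ 0) :
    (C c * ∏ i, (X - C (ρ i))).roots.card = (C c * ∏ i, (X - C (ρ i))).natDegree ∧
      (C c * ∏ i, (X - C (ρ i))).roots.Nodup := by
  refine card_roots_eq_natDegree_and_nodup_of_finset
    (mul_ne_zero (C_ne_zero.2 hc) (Finset.prod_ne_zero_iff.2 fun i _ => X_sub_C_ne_zero (ρ i)))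
    (s := Finset.univ.map ⟨ρ, hρ⟩) ?_ ?_
  · rw [Finset.card_map, natDegree_C_mul hc, natDegree_finsetProd_X_sub_C_eq_card]
  · simp [eval_prod, Finset.prod_eq_zero_iff, sub_eq_zero]

theorem exists_isRoot_mem_Ioo_of_eval_mul_eval_neg (f : ℝ[X]) {x y : ℝ} (hxy : x ≤ y)
    (h : f.eval x * f.eval y < 0) : ∃ r ∈ Set.Ioo x y, f.IsRoot r := by
  rcases mul_neg_iff.1 h with ⟨hx, hy⟩ | ⟨hx, hy⟩
  · exact intermediate_value_Ioo' hxy f.continuous.continuousOn ⟨hy, hx⟩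
  · exact intermediate_value_Ioo hxy f.continuous.continuousOn ⟨hx, hy⟩

theorem exists_isRoot_lt_or_gt_of_neg_one_pow_mul_pos {f : ℝ[X]} {d : ℕ}
    (hdeg : f.natDegree = d + 1) {x y : ℝ} (h : 0 < (-1) ^ d * (f.eval x * f.eval y)) :
    ∃ r, f.IsRoot r ∧ (r < x ∨ y < r) := by
  by_contra! hroots
  rcases le_total 0 f.leadingCoeff with hlc | hlc
  · have hy := zero_le_eval_of_roots_le_of_leadingCoeff_nonneg (fun r hr => (hroots r hr).2) hlc
    have hx := zero_le_negOnePow_mul_eval_of_le_roots_of_leadingCoeff_nonneg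
      (fun r hr => (hroots r hr).1) hlc
    rw [hdeg, Int.cast_negOnePow_natCast, pow_succ] at hx
    nlinarith [mul_nonneg hx hy]
  · have hy := eval_le_zero_of_roots_le_of_leadingCoeff_nonpos (fun r hr => (hroots r hr).2) hlc
    have hx := negOnePow_mul_eval_le_zero_of_le_roots_of_leadingCoeff_nonpos
      (fun r hr => (hroots r hr).1) hlc
    rw [hdeg, Int.cast_negOnePow_natCast, pow_succ] at hx
    nlinarith [mul_nonneg_of_nonpos_of_nonpos hx hy]

theorem exists_finset_isRoot_of_alternating {f : ℝ[X]} {n : ℕ} (hdeg : f.natDegree = n + 1)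
    {μ : Fin (n + 1) → ℝ} (hμ : StrictMono μ)
    (halt : ∀ j : Fin n, f.eval (μ j.castSucc) * f.eval (μ j.succ) < 0)
    (hends : 0 < (-1) ^ n * (f.eval (μ 0) * f.eval (μ (Fin.last n)))) :
    ∃ s : Finset ℝ, s.card = f.natDegree ∧ ∀ x ∈ s, f.IsRoot x := by
  choose r hr hroot using fun j : Fin n =>
    exists_isRoot_mem_Ioo_of_eval_mul_eval_neg f (hμ Fin.castSucc_lt_succ).le (halt j)
  have hr_mono : StrictMono r := fun j k hjk =>
    calc r j < μ j.succ := (hr j).2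
      _ ≤ μ k.castSucc := hμ.monotone (Fin.succ_le_castSucc_iff.2 hjk)
      _ < r k := (hr k).1
  obtain ⟨r₀, hr₀, hout⟩ := exists_isRoot_lt_or_gt_of_neg_one_pow_mul_pos hdeg hends
  have hr₀_notMem : r₀ ∉ Finset.univ.map ⟨r, hr_mono.injective⟩ := by
    simp only [Finset.mem_map, Finset.mem_univ, Function.Embedding.coeFn_mk, true_and, not_exists]
    rintro j rfl
    have := hμ.monotone (Fin.zero_le j.castSucc)
    have := hμ.monotone (Fin.le_last j.succ)
    rcases hout with h | h <;> linarith [(hr j).1, (hr j).2]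
  refine ⟨insert r₀ (Finset.univ.map ⟨r, hr_mono.injective⟩), ?_, ?_⟩
  · rw [Finset.card_insert_of_notMem hr₀_notMem, Finset.card_map,
      Finset.card_univ, Fintype.card_fin, hdeg]
  · simpa [hr₀.eq_zero] using hroot

end Polynomial

section Interlacing

variable {n : ℕ}

def StrictlyInterlaces (μ : Fin (n + 1) → ℝ) (ρ : Fin n → ℝ) : Prop :=
  ∀ i : Fin n, μ i.castSucc < ρ i ∧ ρ i < μ i.succ

variable {μ : Fin (n + 1) → ℝ} {ρ : Fin n → ℝ}

theorem StrictlyInterlaces.lt_of_castSucc_lt (h : StrictlyInterlaces μ ρ) (hμ : StrictMono μ)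
    {i : Fin n} {j : Fin (n + 1)} (hij : i.castSucc < j) : ρ i < μ j :=
  (h i).2.trans_le (hμ.monotone (Fin.castSucc_lt_iff_succ_le.1 hij))

theorem StrictlyInterlaces.gt_of_le_castSucc (h : StrictlyInterlaces μ ρ) (hμ : StrictMono μ)
    {i : Fin n} {j : Fin (n + 1)} (hij : j ≤ i.castSucc) : μ j < ρ i :=
  (hμ.monotone hij).trans_lt (h i).1

theorem StrictlyInterlaces.prod_last_sub_pos (h : StrictlyInterlaces μ ρ) (hμ : StrictMono μ) :
    0 < ∏ i, (μ (Fin.last n) - ρ i) :=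
  Finset.prod_pos fun i _ => sub_pos.2 (h.lt_of_castSucc_lt hμ (Fin.castSucc_lt_last i))

theorem StrictlyInterlaces.neg_one_pow_mul_prod_zero_sub_pos (h : StrictlyInterlaces μ ρ)
    (hμ : StrictMono μ) : 0 < (-1) ^ n * ∏ i, (μ 0 - ρ i) := by
  have hpos : 0 < ∏ i, -(μ 0 - ρ i) :=
    Finset.prod_pos fun i _ => neg_pos.2 (sub_neg.2 (h.gt_of_le_castSucc hμ (Fin.zero_le _)))
  rwa [Finset.prod_neg, Finset.card_univ, Fintype.card_fin] at hpos

/-- Only the factor `i = j` changes sign between `μ j.castSucc` and `μ j.succ`. -/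
theorem StrictlyInterlaces.prod_sub_mul_prod_sub_neg (h : StrictlyInterlaces μ ρ)
    (hμ : StrictMono μ) (j : Fin n) :
    (∏ i, (μ j.castSucc - ρ i)) * ∏ i, (μ j.succ - ρ i) < 0 := by
  rw [← Finset.prod_mul_distrib, ← Finset.mul_prod_erase _ _ (Finset.mem_univ j)]
  refine mul_neg_of_neg_of_pos (mul_neg_of_neg_of_pos (sub_neg.2 (h j).1) (sub_pos.2 (h j).2))
    (Finset.prod_pos fun i hi => ?_)
  rcases (Finset.ne_of_mem_erase hi).lt_or_gt with hij | hij
  · have hij' : i.castSucc < j.castSucc := Fin.castSucc_lt_castSucc_iff.2 hij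
    exact mul_pos (sub_pos.2 (h.lt_of_castSucc_lt hμ hij'))
      (sub_pos.2 (h.lt_of_castSucc_lt hμ (hij'.trans Fin.castSucc_lt_succ)))
  · exact mul_pos_of_neg_of_neg
      (sub_neg.2 (h.gt_of_le_castSucc hμ (Fin.castSucc_le_castSucc_iff.2 hij.le)))
      (sub_neg.2 (h.gt_of_le_castSucc hμ (Fin.succ_le_castSucc_iff.2 hij)))

theorem StrictlyInterlaces.card_roots_eq_natDegree_and_nodup (h : StrictlyInterlaces μ ρ)
    (hμ : StrictMono μ) {f : ℝ[X]} (hf : f ≠ 0) (hdeg : f.natDegree = n + 1) {c : ℝ} (hc : c ≠ 0)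
    (heval : ∀ j, f.eval (μ j) = c * ∏ i, (μ j - ρ i)) :
    f.roots.card = f.natDegree ∧ f.roots.Nodup := by
  have hc2 : 0 < c ^ 2 := by positivity
  obtain ⟨s, hcard, hs⟩ := exists_finset_isRoot_of_alternating hdeg hμ
    (fun j => by
      rw [heval, heval, mul_mul_mul_comm, ← sq]
      exact mul_neg_of_pos_of_neg hc2 (h.prod_sub_mul_prod_sub_neg hμ j))
    (by
      rw [heval, heval, mul_mul_mul_comm, ← sq, mul_left_comm, ← mul_assoc ((-1 : ℝ) ^ n)]
      exact mul_pos hc2 (mul_pos (h.neg_one_pow_mul_prod_zero_sub_pos hμ) (h.prod_last_sub_pos hμ)))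
  exact card_roots_eq_natDegree_and_nodup_of_finset hf hcard hs

end Interlacing

/-- If `p` and `q` are real polynomials with strictly alternating
(interlacing) real, simple roots (here `p` of degree `n` with roots `ρ`, `q` of
degree `n+1` with roots `μ`, strictly interlaced), then every nonzero polynomial
in the real span `{c₁ p + c₂ q}` has only real and simple roots (i.e. its
multiset of real roots has full cardinality equal to the degree, with no
repetitions). -/
theorem stmt0 (n : ℕ) (p q : Polynomial ℝ) (a b : ℝ) (ha : a ≠ 0) (hb : b ≠ 0)
    (ρ : Fin n → ℝ) (μ : Fin (n + 1) → ℝ) (hρ : StrictMono ρ) (hμ : StrictMono μ)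
    (hp : p = C a * ∏ i : Fin n, (X - C (ρ i)))
    (hq : q = C b * ∏ j : Fin (n + 1), (X - C (μ j)))
    (hint : ∀ i : Fin n, μ i.castSucc < ρ i ∧ ρ i < μ i.succ) :
    ∀ c₁ c₂ : ℝ, c₁ • p + c₂ • q ≠ 0 →
      (c₁ • p + c₂ • q).roots.card = (c₁ • p + c₂ • q).natDegree ∧
        (c₁ • p + c₂ • q).roots.Nodup := by
  intro c₁ c₂ hne
  rcases eq_or_ne c₂ 0 with rfl | hc₂
  · have hc₁ : c₁ ≠ 0 := by rintro rfl; simp at hne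
    simp only [hp, zero_smul, add_zero, smul_eq_C_mul, ← mul_assoc, ← C_mul]
    exact card_roots_eq_natDegree_and_nodup_C_mul_prod_X_sub_C hρ.injective (mul_ne_zero hc₁ ha)
  rcases eq_or_ne c₁ 0 with rfl | hc₁
  · simp only [hq, zero_smul, zero_add, smul_eq_C_mul, ← mul_assoc, ← C_mul]
    exact card_roots_eq_natDegree_and_nodup_C_mul_prod_X_sub_C hμ.injective (mul_ne_zero hc₂ hb)
  have hp_deg : p.natDegree = n := by simp [hp, natDegree_C_mul ha]
  have hq_deg : q.natDegree = n + 1 := by simp [hq, natDegree_C_mul hb]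
  have hdeg : (c₁ • p + c₂ • q).natDegree = n + 1 := by
    rw [natDegree_add_eq_right_of_natDegree_lt] <;> rw [natDegree_smul _ hc₂, hq_deg]
    exact (natDegree_smul_le _ _).trans_lt (hp_deg ▸ n.lt_succ_self)
  have heval (j : Fin (n + 1)) : (c₁ • p + c₂ • q).eval (μ j) = c₁ * a * ∏ i, (μ j - ρ i) := by
    simp only [hp, hq, eval_add, eval_smul, eval_mul, eval_C, eval_prod, eval_sub, eval_X,
      smul_eq_mul]
    rw [Finset.prod_eq_zero (Finset.mem_univ j) (sub_self _)]
    ring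
  exact StrictlyInterlaces.card_roots_eq_natDegree_and_nodup hint hμ hne hdeg
    (mul_ne_zero hc₁ ha) heval
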